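/- arXiv:1311.4262 — 4 statements merged into one kernel-verified Lean document; each statement's English description precedes it below -/
import Mathlib

section
/- Let s be a nonzero complex number, y a complex number, x = s + s^{-1}, and let A = [[s,1],[0,s^{-1}]] and B = [[s,0],[2-y,s^{-1}]] be 2×2 complex matrices. For a positive integer m, set W = (B·A^{-1})^m·(B^{-1}·A)^m. Then the trace of W equals 2 + (y-2)(y+2-x^2)·S_{m-1}(y)^2. -/
open Real

/-- Auxiliary sequence for the Chebyshev-like polynomials on natural indices. -/
def Saux {R : Type*} [CommRing R] : ℕ → R → R
  | 0, _ => 1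
  | 1, z => z
  | (n + 2), z => z * Saux (n + 1) z - Saux n z

/-- The Chebyshev-like polynomials `S j` indexed by all integers `j`:
`S 0 z = 1`, `S 1 z = z`, and `S (j + 1) z = z * S j z - S (j - 1) z` for all `j : ℤ`
(so `S (-1) z = 0`, `S (-2) z = -1`, and in general `S (-j) z = -S (j - 2) z`). -/
def S {R : Type*} [CommRing R] (j : ℤ) (z : R) : R :=
  if 0 ≤ j then Saux j.toNat z
  else if j = -1 then 0
  else -Saux (-j - 2).toNat z

/-!
`C = B A⁻¹` and `D = B⁻¹ A` have determinant 1 and trace `y`, so by Cayley–Hamilton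
`C ^ m = S (m - 1) y • C - S (m - 2) y • 1`, and likewise for `D`. Expanding `tr (C ^ m * D ^ m)`
and using `S (m - 1) ^ 2 + S (m - 2) ^ 2 - y S (m - 1) S (m - 2) = 1` gives
`tr (C ^ m * D ^ m) = 2 + S (m - 1) y ^ 2 * (tr (C * D) - 2)`; a direct computation gives
`tr (C * D) - 2 = (y - 2) * (y + 2 - x ^ 2)`.
-/

open Polynomial

section Chebyshev

variable {R : Type*} [CommRing R]

lemma Saux_eq_eval_chebyshevS (n : ℕ) (z : R) : Saux n z = (Chebyshev.S R n).eval z := by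
  induction n using Nat.twoStepInduction with
  | zero => simp [Saux]
  | one => simp [Saux]
  | more n ih₀ ih₁ =>
    rw [Saux, ih₀, ih₁]
    push_cast
    simp [Chebyshev.S_add_two]

lemma S_eq_eval_chebyshevS (j : ℤ) (z : R) : S j z = (Chebyshev.S R j).eval z := by
  unfold S
  split_ifs with hj hj'
  · rw [Saux_eq_eval_chebyshevS, Int.toNat_of_nonneg hj]
  · simp [hj', Chebyshev.S_neg_one]
  · rw [Saux_eq_eval_chebyshevS, Int.toNat_of_nonneg (by omega), ← eval_neg,
      ← Chebyshev.S_neg_sub_two, neg_sub, sub_sub_cancel_left, neg_neg]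

end Chebyshev

section Algebra

variable {R A : Type*} [CommRing R] [Ring A] [Algebra R A]

lemma pow_eq_of_sq_eq_smul_sub_one {a : A} {t : R} (ha : a ^ 2 = t • a - 1) (n : ℕ) :
    a ^ n = (Chebyshev.S R (n - 1)).eval t • a - (Chebyshev.S R (n - 2)).eval t • (1 : A) := by
  induction n with
  | zero => simp [Chebyshev.S_neg_one, Chebyshev.S_neg_two]
  | succ n ih =>
    have hS : Chebyshev.S R (n - 1 + 1) = X * Chebyshev.S R (n - 1) - Chebyshev.S R (n - 2) := by
      rw [Chebyshev.S_add_one, sub_sub, one_add_one_eq_two]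
    rw [pow_succ, ih, sub_mul, smul_mul_assoc, smul_mul_assoc, ← sq, ha, one_mul]
    push_cast
    rw [show (n : ℤ) + 1 - 1 = n - 1 + 1 by ring, show (n : ℤ) + 1 - 2 = n - 1 by ring, hS]
    simp only [eval_sub, eval_mul, eval_X]
    module

end Algebra

namespace Matrix

variable {R : Type*} [CommRing R]

lemma sq_fin_two_eq (M : Matrix (Fin 2) (Fin 2) R) : M ^ 2 = M.trace • M - M.det • 1 := by
  rw [eta_fin_two M, sq]
  ext i j
  fin_cases i <;> fin_cases j <;> simp [trace_fin_two, det_fin_two] <;> ring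

lemma trace_pow_mul_pow_fin_two {M N : Matrix (Fin 2) (Fin 2) R} (hM : M.det = 1)
    (hN : N.det = 1) (htr : N.trace = M.trace) (n : ℕ) :
    (M ^ n * N ^ n).trace =
      2 + (Chebyshev.S R (n - 1)).eval M.trace ^ 2 * ((M * N).trace - 2) := by
  have hM2 : M ^ 2 = M.trace • M - 1 := by rw [sq_fin_two_eq, hM, one_smul]
  have hN2 : N ^ 2 = M.trace • N - 1 := by rw [sq_fin_two_eq, hN, one_smul, htr]
  rw [pow_eq_of_sq_eq_smul_sub_one hM2, pow_eq_of_sq_eq_smul_sub_one hN2]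
  have hid := Chebyshev.S_sq_add_S_sq R ((n : ℤ) - 2)
  rw [show (n : ℤ) - 2 + 1 = n - 1 by ring] at hid
  have := congrArg (eval M.trace) hid
  simp only [eval_sub, eval_add, eval_mul, eval_pow, eval_X, eval_one] at this
  simp only [sub_mul, mul_sub, smul_mul_assoc, mul_smul_comm, mul_one, one_mul,
    trace_sub, trace_smul, trace_one, htr, smul_eq_mul, Fintype.card_fin]
  linear_combination 2 * this

lemma inv_eq_adjugate_of_det_eq_one {n : Type*} [Fintype n] [DecidableEq n] {M : Matrix n n R}
    (hM : M.det = 1) : M⁻¹ = M.adjugate := by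
  simp [inv_def, hM]

end Matrix

theorem stmt1_general (s y x : ℂ) (hs : s ≠ 0) (hx : x = s + s⁻¹) (m : ℕ)
    (A B W : Matrix (Fin 2) (Fin 2) ℂ)
    (hA : A = !![s, 1; 0, s⁻¹]) (hB : B = !![s, 0; 2 - y, s⁻¹])
    (hW : W = (B * A⁻¹) ^ m * (B⁻¹ * A) ^ m) :
    Matrix.trace W = 2 + (y - 2) * (y + 2 - x ^ 2) * S ((m : ℤ) - 1) y ^ 2 := by
  have hdetA : A.det = 1 := by simp [hA, Matrix.det_fin_two_of, hs]
  have hdetB : B.det = 1 := by simp [hB, Matrix.det_fin_two_of, hs]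
  have hAinv : A⁻¹ = !![s⁻¹, -1; 0, s] := by
    rw [Matrix.inv_eq_adjugate_of_det_eq_one hdetA, hA, Matrix.adjugate_fin_two_of, neg_zero]
  have hBinv : B⁻¹ = !![s⁻¹, 0; y - 2, s] := by
    rw [Matrix.inv_eq_adjugate_of_det_eq_one hdetB, hB, Matrix.adjugate_fin_two_of, neg_zero,
      neg_sub]
  have htrC : (B * A⁻¹).trace = y := by
    rw [hB, hAinv, Matrix.mul_fin_two, Matrix.trace_fin_two_of]
    field_simp
    ring
  have htrD : (B⁻¹ * A).trace = y := by
    rw [hBinv, hA, Matrix.mul_fin_two, Matrix.trace_fin_two_of]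
    field_simp
    ring
  have htrCD : (B * A⁻¹ * (B⁻¹ * A)).trace = 2 + (y - 2) * (y + 2 - x ^ 2) := by
    rw [hAinv, hBinv, hA, hB, hx, Matrix.mul_fin_two, Matrix.mul_fin_two, Matrix.mul_fin_two,
      Matrix.trace_fin_two_of]
    field_simp
    ring
  have hdetC : (B * A⁻¹).det = 1 := by simp [hdetA, hdetB]
  have hdetD : (B⁻¹ * A).det = 1 := by simp [hdetA, hdetB]
  rw [hW, Matrix.trace_pow_mul_pow_fin_two hdetC hdetD (htrD.trans htrC.symm), htrC, htrCD,
    S_eq_eval_chebyshevS]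
  ring

theorem stmt1 (s y x : ℂ) (hs : s ≠ 0) (hx : x = s + s⁻¹) (m : ℕ) (hm : 0 < m)
    (A B W : Matrix (Fin 2) (Fin 2) ℂ)
    (hA : A = !![s, 1; 0, s⁻¹]) (hB : B = !![s, 0; 2 - y, s⁻¹])
    (hW : W = (B * A⁻¹) ^ m * (B⁻¹ * A) ^ m) :
    Matrix.trace W = 2 + (y - 2) * (y + 2 - x ^ 2) * S ((m : ℤ) - 1) y ^ 2 :=
  stmt1_general s y x hs hx m A B W hA hB hW
end

section
/- Let m be a nonnegative integer and let x, y be complex numbers. Define λ = x^2 - y - (y-2)(y+2-x^2)·S_m(y)·S_{m-1}(y) and α = 1 + (y+2-x^2)·S_{m-1}(y)·(S_m(y) - S_{m-1}(y)). Then α^2 - α·λ + 1 = (1 + (y+2-x^2)·S_{m-1}(y)·S_m(y))·(2-λ). -/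
/-!
The Chebyshev recurrence preserves the quadratic form `a² + b² - z a b` on consecutive
pairs `(S (j+1) z, S j z)`, so this form is identically `1`. With `a = S m y` and
`b = S (m-1) y`, the difference of the two sides is `(y + 2 - x²)² b² (a² + b² - y a b - 1)`.
-/

open Real

section

variable {R : Type*} [CommRing R] (z : R)

theorem S_natCast (n : ℕ) : S n z = Saux n z := by
  simp [S]

theorem S_neg_sub_two (n : ℕ) : S (-n - 2) z = -Saux n z := by
  rw [S, if_neg (by omega), if_neg (by omega)]
  congr
  omega

theorem S_add_one (j : ℤ) : S (j + 1) z = z * S j z - S (j - 1) z := by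
  obtain ⟨n, rfl | rfl⟩ := j.eq_nat_or_neg
  · rcases n with _ | n
    · simp [S, Saux]
    · rw [show ((n + 1 : ℕ) : ℤ) + 1 = (n + 2 : ℕ) by push_cast; ring,
        show ((n + 1 : ℕ) : ℤ) - 1 = n by push_cast; ring, S_natCast, S_natCast, S_natCast]
      rfl
  · rcases n with _ | _ | _ | n
    · simp [S, Saux]
    · simp [S, Saux]
    · norm_num [S, Saux]
    · rw [show -((n + 3 : ℕ) : ℤ) + 1 = -n - 2 by push_cast; ring,
        show -((n + 3 : ℕ) : ℤ) = -(n + 1 : ℕ) - 2 by push_cast; ring,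
        show -((n + 1 : ℕ) : ℤ) - 2 - 1 = -(n + 2 : ℕ) - 2 by push_cast; ring,
        S_neg_sub_two, S_neg_sub_two, S_neg_sub_two]
      rw [show Saux (n + 2) z = z * Saux (n + 1) z - Saux n z from rfl]
      ring

theorem S_sq_add_sq_sub_mul_eq_one (j : ℤ) : S (j + 1) z ^ 2 + S j z ^ 2 - z * S (j + 1) z * S j z = 1 := by
  induction j using Int.induction_on with
  | zero =>
    norm_num [S, Saux]
    ring
  | succ i ih =>
    rw [S_add_one z (i + 1), add_sub_cancel_right]
    linear_combination ih
  | pred i ih =>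
    rw [sub_add_cancel]
    have h := S_add_one z (-i)
    linear_combination ih + (S (-i - 1) z - S (-i + 1) z) * h

end

theorem stmt6 (m : ℕ) (x y lam alp : ℂ)
    (hlam : lam = x ^ 2 - y - (y - 2) * (y + 2 - x ^ 2) * S (m : ℤ) y * S ((m : ℤ) - 1) y)
    (halp : alp = 1 + (y + 2 - x ^ 2) * S ((m : ℤ) - 1) y * (S (m : ℤ) y - S ((m : ℤ) - 1) y)) :
    alp ^ 2 - alp * lam + 1 =
      (1 + (y + 2 - x ^ 2) * S ((m : ℤ) - 1) y * S (m : ℤ) y) * (2 - lam) := by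
  have pell := S_sq_add_sq_sub_mul_eq_one y ((m : ℤ) - 1)
  rw [sub_add_cancel] at pell
  subst hlam halp
  linear_combination (y + 2 - x ^ 2) ^ 2 * S ((m : ℤ) - 1) y ^ 2 * pell
end

section
/- Let m and n be positive integers. For every real number x there exists a real number y such that φ(x,y) = 0, where φ(x,y) = S_{n-1}(λ)·α - S_{n-2}(λ) with λ = 2 + (y-2)(y+2-x^2)·S_{m-1}(y)^2 and α = 1 - (y+2-x^2)·S_{m-1}(y)·(S_{m-1}(y) - S_{m-2}(y)). -/
open Real

/-!
With `c = 2 - x²`, the Riley polynomial is `φ = S_{n-1}(λ)·α - S_{n-2}(λ)` for polynomials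
`λ, α ∈ ℝ[y]`, where `λ` is monic of degree `2m` and `1 - α` is monic of degree `2m - 1`.
Hence `-φ = S_{n-1}(λ)·(1 - α) + (S_{n-2} - S_{n-1})(λ)` is monic: the first summand has degree
`(n-1)·2m + 2m - 1` and the second at most `(n-1)·2m`. A real polynomial of odd degree
`2mn - 1` has a real root by the intermediate value theorem.
-/

open Polynomial Filter

namespace Polynomial

theorem exists_isRoot_of_odd_natDegree {p : ℝ[X]} (hp : Odd p.natDegree) : ∃ x, p.IsRoot x := by
  wlog hlc : 0 < p.leadingCoeff generalizing p
  · have hp0 : p ≠ 0 := by rintro rfl; simp at hp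
    obtain ⟨x, hx⟩ := @this (-p) (by rwa [natDegree_neg])
      (by rw [leadingCoeff_neg]; exact neg_pos.2 ((not_lt.1 hlc).lt_of_ne (by simpa using hp0)))
    exact ⟨x, by simpa using hx⟩
  have hdeg : 0 < p.degree := natDegree_pos_iff_degree_pos.1 hp.pos
  have hright : ∀ᶠ x in atTop, 0 ≤ p.eval x :=
    (p.tendsto_atTop_of_leadingCoeff_nonneg hdeg hlc.le).eventually_ge_atTop 0
  have hleft : ∀ᶠ x in atTop, (p.comp (-X)).eval x ≤ 0 :=
    ((p.comp (-X)).tendsto_atBot_of_leadingCoeff_nonpos (by rwa [degree_comp_neg_X])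
      (by simp [hp.neg_one_pow, hlc.le])).eventually_le_atBot 0
  obtain ⟨a, ha, ha'⟩ := (hright.and hleft).exists
  obtain ⟨x, hx⟩ := intermediate_value_univ (-a) a p.continuous ⟨by simpa using ha', ha⟩
  exact ⟨x, hx⟩

theorem natDegree_comp_mul_add_comp {R : Type*} [CommRing R] [Nontrivial R] {p r q a : R[X]}
    (hp : p.Monic) (hq : q.Monic) (ha : a.Monic) (hq0 : q.natDegree ≠ 0) (ha0 : a.natDegree ≠ 0)
    (hr : r.natDegree ≤ p.natDegree) :
    (p.comp q * a + r.comp q).natDegree = p.natDegree * q.natDegree + a.natDegree := by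
  have hlead : (p.comp q * a).natDegree = p.natDegree * q.natDegree + a.natDegree := by
    rw [(hp.comp hq hq0).natDegree_mul ha,
      natDegree_comp_eq_of_mul_ne_zero (by simp [hp.leadingCoeff, hq.leadingCoeff])]
  have hlt : (r.comp q).natDegree < (p.comp q * a).natDegree := by
    rw [hlead]
    calc (r.comp q).natDegree ≤ r.natDegree * q.natDegree := natDegree_comp_le
      _ ≤ p.natDegree * q.natDegree := by gcongr
      _ < _ := by omega
  rw [natDegree_add_eq_left_of_natDegree_lt hlt, hlead]

namespace Chebyshev

variable (R : Type*) [CommRing R]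

theorem degree_S_natCast [Nontrivial R] (n : ℕ) : (S R n).degree = n := by
  induction n using Nat.twoStepInduction with
  | zero => simp
  | one => simp
  | more n ih1 ih2 =>
    push_cast at ih2 ⊢
    have : (X * S R (n + 1)).degree = ↑(n + 2) := by
      rw [mul_comm, degree_mul_X, ih2]; norm_cast
    rw [S_add_two, degree_sub_eq_left_of_degree_lt (by rw [ih1, this]; norm_cast; omega), this]
    norm_cast

theorem monic_S_natCast (n : ℕ) : (S R n).Monic := by
  nontriviality R
  induction n using Nat.twoStepInduction with
  | zero => simp
  | one => simp
  | more n ih1 ih2 =>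
    push_cast at ih2 ⊢
    rw [S_add_two]
    refine (monic_X.mul ih2).sub_of_left ?_
    have h := degree_S_natCast R (n + 1)
    push_cast at h
    rw [mul_comm, degree_mul_X, degree_S_natCast, h]
    norm_cast; omega

theorem natDegree_S_natCast [Nontrivial R] (n : ℕ) : (S R n).natDegree = n :=
  natDegree_eq_of_degree_eq_some (degree_S_natCast R n)

theorem degree_S_sub_one_lt [Nontrivial R] (n : ℕ) : (S R (n - 1)).degree < (S R n).degree := by
  cases n with
  | zero => simp
  | succ n =>
    rw [degree_S_natCast, show ((n + 1 : ℕ) : ℤ) - 1 = n by omega, degree_S_natCast]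
    exact_mod_cast n.lt_succ_self

theorem monic_S_sub_S_sub_one (n : ℕ) : (S R n - S R (n - 1)).Monic := by
  nontriviality R
  exact (monic_S_natCast R n).sub_of_left (degree_S_sub_one_lt R n)

theorem natDegree_S_sub_S_sub_one [Nontrivial R] (n : ℕ) :
    (S R n - S R (n - 1)).natDegree = n := by
  refine natDegree_eq_of_degree_eq_some ?_
  rw [degree_sub_eq_left_of_degree_lt (degree_S_sub_one_lt R n), degree_S_natCast]

end Chebyshev

end Polynomial

theorem Saux_eq_eval_chebyshev_S {R : Type*} [CommRing R] (n : ℕ) (z : R) :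
    Saux n z = (Chebyshev.S R n).eval z := by
  induction n using Nat.twoStepInduction with
  | zero => simp [Saux]
  | one => simp [Saux]
  | more n ih1 ih2 =>
    push_cast at ih2 ⊢
    simp [Saux, Chebyshev.S_add_two, ih1, ih2]

theorem S_eq_eval_chebyshev_S {R : Type*} [CommRing R] (j : ℤ) (z : R) :
    S j z = (Chebyshev.S R j).eval z := by
  unfold S
  split_ifs with h0 h1
  · rw [Saux_eq_eval_chebyshev_S, Int.toNat_of_nonneg h0]
  · simp [h1]
  · rw [Saux_eq_eval_chebyshev_S, Int.toNat_of_nonneg (by omega), ← eval_neg,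
      ← Chebyshev.S_neg_sub_two, show -(-j - 2) - 2 = j by ring]

section Riley

/-! With `c = 2 - x²`, these are the paper's `λ`, `α` and `φ`, as polynomials in `y`. -/

variable {R : Type*} [CommRing R]

noncomputable def rileyLambda (c : R) (m : ℕ) : R[X] :=
  C 2 + (X - C 2) * (X + C c) * Chebyshev.S R (m - 1) ^ 2

noncomputable def rileyAlpha (c : R) (m : ℕ) : R[X] :=
  1 - (X + C c) * Chebyshev.S R (m - 1) * (Chebyshev.S R (m - 1) - Chebyshev.S R (m - 2))

noncomputable def rileyPoly (c : R) (m n : ℕ) : R[X] :=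
  (Chebyshev.S R (n - 1)).comp (rileyLambda c m) * rileyAlpha c m -
    (Chebyshev.S R (n - 2)).comp (rileyLambda c m)

theorem eval_rileyPoly (c y : R) (m n : ℕ) :
    (rileyPoly c m n).eval y =
      S ((n : ℤ) - 1) (2 + (y - 2) * (y + c) * S ((m : ℤ) - 1) y ^ 2) *
      (1 - (y + c) * S ((m : ℤ) - 1) y * (S ((m : ℤ) - 1) y - S ((m : ℤ) - 2) y)) -
      S ((n : ℤ) - 2) (2 + (y - 2) * (y + c) * S ((m : ℤ) - 1) y ^ 2) := by
  simp [rileyPoly, rileyLambda, rileyAlpha, S_eq_eval_chebyshev_S, eval_comp]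

variable [Nontrivial R]

theorem monic_and_natDegree_rileyLambda (c : R) {m : ℕ} (hm : 0 < m) :
    (rileyLambda c m).Monic ∧ (rileyLambda c m).natDegree = 2 * m := by
  obtain ⟨k, rfl⟩ := Nat.exists_eq_add_one.2 hm
  have hS := Chebyshev.monic_S_natCast R k
  have hXX := (monic_X_sub_C (2 : R)).mul (monic_X_add_C c)
  have hdeg : ((X - C 2) * (X + C c) * Chebyshev.S R k ^ 2).natDegree = 2 * (k + 1) := by
    rw [hXX.natDegree_mul (hS.pow 2), (monic_X_sub_C 2).natDegree_mul (monic_X_add_C c),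
      natDegree_X_sub_C, natDegree_X_add_C, hS.natDegree_pow, Chebyshev.natDegree_S_natCast]
    ring
  rw [rileyLambda, show ((k + 1 : ℕ) : ℤ) - 1 = k by omega, natDegree_C_add, hdeg,
    add_comm]
  refine ⟨(hXX.mul (hS.pow 2)).add_of_left (degree_C_le.trans_lt ?_), rfl⟩
  rw [degree_eq_natDegree (hXX.mul (hS.pow 2)).ne_zero, hdeg]
  exact_mod_cast (by omega)

theorem monic_and_natDegree_one_sub_rileyAlpha (c : R) {m : ℕ} (hm : 0 < m) :
    (1 - rileyAlpha c m).Monic ∧ (1 - rileyAlpha c m).natDegree = 2 * m - 1 := by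
  obtain ⟨k, rfl⟩ := Nat.exists_eq_add_one.2 hm
  have hS := Chebyshev.monic_S_natCast R k
  have hXS := (monic_X_add_C c).mul hS
  have hD := Chebyshev.monic_S_sub_S_sub_one R k
  rw [rileyAlpha, sub_sub_cancel, show ((k + 1 : ℕ) : ℤ) - 1 = k by omega,
    show ((k + 1 : ℕ) : ℤ) - 2 = k - 1 by omega]
  refine ⟨hXS.mul hD, ?_⟩
  rw [hXS.natDegree_mul hD, (monic_X_add_C c).natDegree_mul hS, natDegree_X_add_C,
    Chebyshev.natDegree_S_natCast, Chebyshev.natDegree_S_sub_S_sub_one]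
  omega

theorem natDegree_rileyPoly (c : R) {m n : ℕ} (hm : 0 < m) (hn : 0 < n) :
    (rileyPoly c m n).natDegree = 2 * m * n - 1 := by
  obtain ⟨l, rfl⟩ := Nat.exists_eq_add_one.2 hn
  obtain ⟨hΛ, hΛdeg⟩ := monic_and_natDegree_rileyLambda c hm
  obtain ⟨hA, hAdeg⟩ := monic_and_natDegree_one_sub_rileyAlpha c hm
  have hneg : -rileyPoly c m (l + 1) =
      (Chebyshev.S R l).comp (rileyLambda c m) * (1 - rileyAlpha c m) +
        (-(Chebyshev.S R l - Chebyshev.S R (l - 1))).comp (rileyLambda c m) := by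
    rw [rileyPoly, show ((l + 1 : ℕ) : ℤ) - 1 = l by omega,
      show ((l + 1 : ℕ) : ℤ) - 2 = l - 1 by omega, neg_comp, sub_comp]
    ring
  rw [← natDegree_neg, hneg, natDegree_comp_mul_add_comp (Chebyshev.monic_S_natCast R l) hΛ hA
    (by omega) (by omega)
    (by rw [natDegree_neg, Chebyshev.natDegree_S_sub_S_sub_one, Chebyshev.natDegree_S_natCast]),
    Chebyshev.natDegree_S_natCast, hΛdeg, hAdeg, mul_comm l, Nat.mul_succ,
    Nat.add_sub_assoc (by omega)]

end Riley

theorem stmt16 (m n : ℕ) (hm : 0 < m) (hn : 0 < n) (x : ℝ) :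
    ∃ y : ℝ,
      S ((n : ℤ) - 1) (2 + (y - 2) * (y + 2 - x ^ 2) * S ((m : ℤ) - 1) y ^ 2) *
      (1 - (y + 2 - x ^ 2) * S ((m : ℤ) - 1) y * (S ((m : ℤ) - 1) y - S ((m : ℤ) - 2) y)) -
      S ((n : ℤ) - 2) (2 + (y - 2) * (y + 2 - x ^ 2) * S ((m : ℤ) - 1) y ^ 2) = 0 := by
  have hodd : Odd (rileyPoly (2 - x ^ 2) m n).natDegree := by
    rw [natDegree_rileyPoly _ hm hn]
    exact Nat.Even.sub_odd (by positivity : 0 < 2 * m * n) (by simp [mul_assoc]) odd_one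
  obtain ⟨y, hy⟩ := exists_isRoot_of_odd_natDegree hodd
  refine ⟨y, ?_⟩
  simpa only [eval_rileyPoly, add_sub_assoc] using hy.eq_zero
end

section
/- Let m and n be positive integers and let x be a real number with 2·√(1 - 1/(4mn)) < |x| ≤ 2 (for example x = 2·cos(π/r) for a real number r > π / arccos(√(1 - 1/(4mn)))). Then there exists a real number y with y > 2 such that φ(x,y) = 0, where φ(x,y) = S_{n-1}(λ)·α - S_{n-2}(λ) with λ = 2 + (y-2)(y+2-x^2)·S_{m-1}(y)^2 and α = 1 - (y+2-x^2)·S_{m-1}(y)·(S_{m-1}(y) - S_{m-2}(y)). -/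
open Real

/-!
At `y = 2` every `S j` evaluates to `j + 1`, so `φ(x, 2) = 1 - m n (4 - x²)`, which is positive
exactly when `x² > 4 - 1 / (m n)`, i.e. under the hypothesis on `|x|`. For `y > 3` the factor `α`
is negative while `S (n - 1) λ ≥ 1` and `S (n - 2) λ ≥ 0`, so `φ(x, y) < 0`. The intermediate
value theorem gives a root in `(2, 4)`.
-/

section Chebyshev

variable {R : Type*} [CommRing R]

lemma Saux_add_two (k : ℕ) (z : R) : Saux (k + 2) z = z * Saux (k + 1) z - Saux k z := rfl

lemma Saux_two : ∀ k : ℕ, Saux k (2 : R) = k + 1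
  | 0 => by simp [Saux]
  | 1 => by norm_num [Saux]
  | k + 2 => by rw [Saux_add_two, Saux_two (k + 1), Saux_two k]; push_cast; ring

lemma S_two (j : ℤ) : S j (2 : R) = j + 1 := by
  unfold S
  split_ifs with hj hj'
  · rw [Saux_two]; exact_mod_cast congrArg (fun k : ℤ => (k : R) + 1) (Int.toNat_of_nonneg hj)
  · simp [hj']
  · rw [Saux_two, ← Int.cast_natCast, Int.toNat_of_nonneg (by omega)]; push_cast; ring

lemma continuous_Saux [TopologicalSpace R] [IsTopologicalRing R] :
    ∀ k : ℕ, Continuous (Saux k : R → R)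
  | 0 => continuous_const
  | 1 => continuous_id
  | k + 2 => (continuous_id.mul (continuous_Saux (k + 1))).sub (continuous_Saux k)

@[fun_prop]
lemma continuous_S [TopologicalSpace R] [IsTopologicalRing R] (j : ℤ) :
    Continuous (S j : R → R) := by
  unfold S
  split_ifs
  · exact continuous_Saux _
  · exact continuous_const
  · exact (continuous_Saux _).neg

end Chebyshev

section Monotone

variable {R : Type*} [CommRing R] [LinearOrder R] [IsStrictOrderedRing R] {y : R}

/-- For `y ≥ 2` the gaps `Saux (k + 1) y - Saux k y` form a nondecreasing sequence starting at
`y - 1 ≥ 1`. -/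
lemma Saux_nonneg_and_add_one_le (hy : 2 ≤ y) :
    ∀ k : ℕ, 0 ≤ Saux k y ∧ Saux k y + 1 ≤ Saux (k + 1) y
  | 0 => ⟨zero_le_one, by simp only [Saux]; linarith⟩
  | k + 1 => by
      obtain ⟨h0, h1⟩ := Saux_nonneg_and_add_one_le hy k
      refine ⟨by linarith, ?_⟩
      rw [Saux_add_two]
      nlinarith

lemma S_nonneg {j : ℤ} (hj : -1 ≤ j) (hy : 2 ≤ y) : 0 ≤ S j y := by
  unfold S
  split_ifs
  · exact (Saux_nonneg_and_add_one_le hy _).1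
  · exact le_rfl
  · omega

lemma S_sub_one_add_one_le {j : ℤ} (hj : 0 ≤ j) (hy : 2 ≤ y) : S (j - 1) y + 1 ≤ S j y := by
  obtain rfl | hj := hj.eq_or_lt
  · simp [S, Saux]
  · have hk : j.toNat = (j - 1).toNat + 1 := by omega
    rw [S, if_pos (show 0 ≤ j - 1 by omega), S, if_pos hj.le, hk]
    exact (Saux_nonneg_and_add_one_le hy _).2

end Monotone

/-- The Riley polynomial `φ(x, y)` of the double twist knot `J(2m, 2n)`. -/
def riley {R : Type*} [CommRing R] (m n : ℤ) (x y : R) : R :=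
  S (n - 1) (2 + (y - 2) * (y + 2 - x ^ 2) * S (m - 1) y ^ 2) *
    (1 - (y + 2 - x ^ 2) * S (m - 1) y * (S (m - 1) y - S (m - 2) y)) -
  S (n - 2) (2 + (y - 2) * (y + 2 - x ^ 2) * S (m - 1) y ^ 2)

lemma riley_two {R : Type*} [CommRing R] (m n : ℤ) (x : R) :
    riley m n x 2 = 1 - m * n * (4 - x ^ 2) := by
  simp only [riley, sub_self, zero_mul, add_zero, S_two]
  push_cast
  ring

lemma riley_neg {R : Type*} [CommRing R] [LinearOrder R] [IsStrictOrderedRing R]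
    {m n : ℤ} (hm : 1 ≤ m) (hn : 1 ≤ n) {x y : R} (hx : x ^ 2 ≤ 4) (hy : 3 < y) :
    riley m n x y < 0 := by
  have hy2 : (2 : R) ≤ y := by linarith
  have hb := S_nonneg (show -1 ≤ m - 2 by omega) hy2
  have hab := S_sub_one_add_one_le (show 0 ≤ m - 1 by omega) hy2
  rw [show m - 1 - 1 = m - 2 by ring] at hab
  set a := S (m - 1) y
  set b := S (m - 2) y
  have hα : 1 - (y + 2 - x ^ 2) * a * (a - b) < 0 := by
    have : 1 ≤ a * (a - b) := by nlinarith
    nlinarith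
  have hL : (2 : R) ≤ 2 + (y - 2) * (y + 2 - x ^ 2) * a ^ 2 := by
    have : 0 ≤ (y - 2) * (y + 2 - x ^ 2) := by nlinarith
    nlinarith [sq_nonneg a]
  have hq := S_nonneg (show -1 ≤ n - 2 by omega) hL
  have hpq := S_sub_one_add_one_le (show 0 ≤ n - 1 by omega) hL
  rw [show n - 1 - 1 = n - 2 by ring] at hpq
  unfold riley
  nlinarith

lemma continuous_riley (m n : ℤ) (x : ℝ) : Continuous (riley m n x) := by
  unfold riley
  fun_prop

lemma mul_mul_four_sub_sq_lt_one {m n : ℕ} (hm : 0 < m) (hn : 0 < n) {x : ℝ}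
    (hx : 2 * √(1 - 1 / (4 * (m : ℝ) * n)) < |x|) : (m : ℝ) * n * (4 - x ^ 2) < 1 := by
  have hmn : (0 : ℝ) < m * n := by positivity
  have hx' : 0 < |x| / 2 := by linarith [Real.sqrt_nonneg (1 - 1 / (4 * (m : ℝ) * n))]
  have h := (Real.sqrt_lt' hx').mp (show √(1 - 1 / (4 * (m : ℝ) * n)) < |x| / 2 by linarith)
  rw [div_pow, sq_abs] at h
  have : 1 / (4 * (m : ℝ) * n) * (4 * (m * n)) = 1 := by field_simp
  nlinarith

theorem stmt17 (m n : ℕ) (hm : 0 < m) (hn : 0 < n) (x : ℝ)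
    (hx1 : 2 * Real.sqrt (1 - 1 / (4 * (m : ℝ) * (n : ℝ))) < |x|) (hx2 : |x| ≤ 2) :
    ∃ y : ℝ, 2 < y ∧
      S ((n : ℤ) - 1) (2 + (y - 2) * (y + 2 - x ^ 2) * S ((m : ℤ) - 1) y ^ 2) *
      (1 - (y + 2 - x ^ 2) * S ((m : ℤ) - 1) y * (S ((m : ℤ) - 1) y - S ((m : ℤ) - 2) y)) -
      S ((n : ℤ) - 2) (2 + (y - 2) * (y + 2 - x ^ 2) * S ((m : ℤ) - 1) y ^ 2) = 0 := by
  have hx : x ^ 2 ≤ 4 := by nlinarith [sq_abs x, abs_nonneg x]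
  have hpos : 0 < riley (m : ℤ) n x 2 := by
    rw [riley_two]
    push_cast
    linarith [mul_mul_four_sub_sq_lt_one hm hn hx1]
  have hneg : riley (m : ℤ) n x 4 < 0 := riley_neg (by omega) (by omega) hx (by norm_num)
  obtain ⟨y, hy, hroot⟩ := intermediate_value_Ioo' (by norm_num : (2 : ℝ) ≤ 4)
    (continuous_riley _ _ x).continuousOn ⟨hneg, hpos⟩
  exact ⟨y, hy.1, hroot⟩
end
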